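/- arXiv:2504.17151 — 9 statements merged into one kernel-verified Lean document; each statement's English description precedes it below -/
import Mathlib

section
/- Suppose posteriors are given by the RML formula π_A(ω) = (π(ω)/π(A∩P_ω)) · (u(A∩P_ω)/Σ_{P: A∩P≠∅} u(A∩P)) with u(A∩P) = π(P) whenever A∩P = P. If E is a union of blocks of the partition 𝒫, then for every event A ⊇ E and any ω, ω' ∈ E, the ratio π_A(ω)/π_A(ω') equals π(ω)/π(ω'). In particular, π_E is the Bayesian update of π_A conditional on E. -/
/-!
For `ω` in a union of blocks `E ⊆ A`, the block of `ω` lies entirely inside `A`, so the weight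
`u (A ∩ P_ω)` is the prior mass `π(P_ω) = π(A ∩ P_ω)` and the RML formula collapses to
`π_A(ω) = π(ω) / Z_A` with a normalizer `Z_A` independent of `ω`. Ratios on `E` therefore
agree with the prior, and since `Z_E = π(E)` this also gives `π_E = π_A(· | E)`.
-/

open Finset

/-- The RML posterior formula (see the paper, equation for RML updating). -/
noncomputable def rml {Ω ι : Type*} [Fintype Ω] [DecidableEq Ω] [DecidableEq ι]
    (b : Ω → ι) (π : Ω → ℝ) (u : Finset Ω → ℝ) (A : Finset Ω) (ω : Ω) : ℝ :=
  if ω ∈ A then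
    (π ω / ∑ ω' ∈ A.filter (fun x => b x = b ω), π ω') *
      (u (A.filter (fun x => b x = b ω)) /
        ∑ i ∈ A.image b, u (A.filter (fun x => b x = i)))
  else 0

namespace Rml

variable {Ω ι : Type*} [DecidableEq ι] (b : Ω → ι)

abbrev block [Fintype Ω] (ω : Ω) : Finset Ω := univ.filter (fun x => b x = b ω)

noncomputable def normalizer (u : Finset Ω → ℝ) (A : Finset Ω) : ℝ :=
  ∑ i ∈ A.image b, u (A.filter (fun x => b x = i))

variable {b}

theorem filter_eq_block_of_block_subset [Fintype Ω] {A : Finset Ω} {ω : Ω}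
    (h : block b ω ⊆ A) :
    A.filter (fun x => b x = b ω) = block b ω := by
  ext x
  simp only [mem_filter, mem_univ, true_and, and_iff_right_iff_imp]
  exact fun hx => h (mem_filter.mpr ⟨mem_univ x, hx⟩)

theorem normalizer_pos {u : Finset Ω → ℝ} (hu : ∀ B : Finset Ω, B.Nonempty → 0 < u B)
    {A : Finset Ω} (hA : A.Nonempty) : 0 < normalizer b u A := by
  refine sum_pos (fun i hi => ?_) (hA.image b)
  obtain ⟨x, hx, rfl⟩ := mem_image.mp hi
  exact hu _ ⟨x, mem_filter.mpr ⟨hx, rfl⟩⟩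

theorem rml_eq_div_normalizer [Fintype Ω] [DecidableEq Ω] {π : Ω → ℝ}
    (hπ : ∀ ω, 0 < π ω) {u : Finset Ω → ℝ} {A : Finset Ω} {ω : Ω} (hω : block b ω ⊆ A)
    (hu : u (block b ω) = ∑ x ∈ block b ω, π x) :
    rml b π u A ω = π ω / normalizer b u A := by
  have hωA : ω ∈ A := hω (mem_filter.mpr ⟨mem_univ ω, rfl⟩)
  have hmass : 0 < ∑ x ∈ block b ω, π x := sum_pos (fun x _ => hπ x) ⟨ω, by simp⟩
  rw [rml, if_pos hωA, filter_eq_block_of_block_subset hω, hu, div_mul_div_comm,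
    mul_comm (π ω), mul_div_mul_left _ _ hmass.ne', normalizer]

theorem normalizer_eq_sum_of_union_blocks [Fintype Ω] {π : Ω → ℝ} {u : Finset Ω → ℝ}
    (hu : ∀ ω, u (block b ω) = ∑ x ∈ block b ω, π x) {E : Finset Ω}
    (hE : ∀ ω ∈ E, block b ω ⊆ E) : normalizer b u E = ∑ ω ∈ E, π ω := by
  rw [normalizer, ← sum_fiberwise_of_maps_to (fun x hx => mem_image_of_mem b hx) π]
  refine sum_congr rfl fun i hi => ?_
  obtain ⟨x, hx, rfl⟩ := mem_image.mp hi
  rw [filter_eq_block_of_block_subset (hE x hx), hu]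

end Rml

open Rml in
theorem stmt_1_general {Ω ι : Type*} [Fintype Ω] [DecidableEq Ω] [DecidableEq ι]
    (b : Ω → ι) (π : Ω → ℝ) (hπpos : ∀ ω, 0 < π ω)
    (u : Finset Ω → ℝ) (hu : ∀ B : Finset Ω, B.Nonempty → 0 < u B)
    (hufull : ∀ B : Finset Ω, (∃ i : ι, B = Finset.univ.filter (fun x => b x = i)) →
      u B = ∑ ω ∈ B, π ω)
    (E : Finset Ω)
    (hE : ∀ ω ∈ E, Finset.univ.filter (fun x => b x = b ω) ⊆ E)
    (A : Finset Ω) (hEA : E ⊆ A) :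
    (∀ ω ∈ E, ∀ ω' ∈ E, rml b π u A ω / rml b π u A ω' = π ω / π ω') ∧
    (∀ ω ∈ E, rml b π u E ω = rml b π u A ω / ∑ ω'' ∈ E, rml b π u A ω'') := by
  have hblock (ω : Ω) : u (block b ω) = ∑ x ∈ block b ω, π x := hufull _ ⟨b ω, rfl⟩
  have hrmlA {ω : Ω} (hω : ω ∈ E) : rml b π u A ω = π ω / normalizer b u A :=
    rml_eq_div_normalizer hπpos ((hE ω hω).trans hEA) (hblock ω)
  have hnormA {ω : Ω} (hω : ω ∈ E) : normalizer b u A ≠ 0 :=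
    (normalizer_pos hu ⟨ω, hEA hω⟩).ne'
  refine ⟨fun ω hω ω' hω' => ?_, fun ω hω => ?_⟩
  · rw [hrmlA hω, hrmlA hω', div_div_div_cancel_right₀ (hnormA hω)]
  · have hmassA : ∑ x ∈ E, rml b π u A x = (∑ x ∈ E, π x) / normalizer b u A := by
      rw [sum_div]
      exact sum_congr rfl fun x hx => hrmlA hx
    rw [rml_eq_div_normalizer hπpos (hE ω hω) (hblock ω),
      normalizer_eq_sum_of_union_blocks hblock hE, hrmlA hω, hmassA,
      div_div_div_cancel_right₀ (hnormA hω)]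

/-- if `E` is a union of blocks, then for every `A ⊇ E` the RML posterior
preserves the prior likelihood ratios on `E`, and `π_E` is the Bayesian update of `π_A`
conditional on `E`. -/
theorem stmt_1 {Ω ι : Type*} [Fintype Ω] [Nonempty Ω] [DecidableEq Ω] [DecidableEq ι]
    (b : Ω → ι) (π : Ω → ℝ) (hπpos : ∀ ω, 0 < π ω) (hπsum : ∑ ω, π ω = 1)
    (u : Finset Ω → ℝ) (hu : ∀ B : Finset Ω, B.Nonempty → 0 < u B)
    (hufull : ∀ B : Finset Ω, (∃ i : ι, B = Finset.univ.filter (fun x => b x = i)) →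
      u B = ∑ ω ∈ B, π ω)
    (E : Finset Ω) (hEne : E.Nonempty)
    (hE : ∀ ω ∈ E, Finset.univ.filter (fun x => b x = b ω) ⊆ E)
    (A : Finset Ω) (hEA : E ⊆ A) :
    (∀ ω ∈ E, ∀ ω' ∈ E, rml b π u A ω / rml b π u A ω' = π ω / π ω') ∧
    (∀ ω ∈ E, rml b π u E ω = rml b π u A ω / ∑ ω'' ∈ E, rml b π u A ω'') :=
  stmt_1_general b π hπpos u hu hufull E hE A hEA
end

section
/- Let posteriors be given by the RML formula with weight u satisfying u(D) > π(D) for every nonempty proper subset D of a block P ∈ 𝒫 (non-extremeness) and u(P) = π(P) for full blocks. If E ⊊ P for some block P with E nonempty, then E^c is not ideal: specifically, taking A = E^c, for ω ∈ P\E and ω' ∈ P^c (assuming P^c nonempty), π_A(ω)/π_A(ω') > π(ω)/π(ω'). -/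
/-
The normalising constant of the RML formula is common to all states, so the ratio of two posteriors
is the prior ratio times the ratio of the distortion factors `u(A ∩ P) / π(A ∩ P)` of their cells.
For `A = Eᶜ`, a state `ω' ∉ P` keeps its full block, whose factor is `1` because `u(P') = π(P')`,
while `ω ∈ P \ E` sits in the proper nonempty subset `P \ E` of `P`, whose factor exceeds `1` by
non-extremeness.
-/

open Finset

lemma filter_sdiff_eq {α : Type*} [DecidableEq α] (s t : Finset α) (p : α → Prop)
    [DecidablePred p] : (s \ t).filter p = s.filter p \ t := by
  ext x
  simp only [mem_filter, mem_sdiff]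
  tauto

lemma sum_image_filter_pos {Ω ι : Type*} [DecidableEq ι] (b : Ω → ι) (u : Finset Ω → ℝ)
    (hu : ∀ B : Finset Ω, B.Nonempty → 0 < u B) {A : Finset Ω} (hA : A.Nonempty) :
    0 < ∑ i ∈ A.image b, u (A.filter (fun x => b x = i)) := by
  refine sum_pos (fun i hi => ?_) (hA.image b)
  obtain ⟨x, hxA, rfl⟩ := mem_image.mp hi
  exact hu _ ⟨x, mem_filter.mpr ⟨hxA, rfl⟩⟩

section Posterior

variable {Ω ι : Type*} [Fintype Ω] [DecidableEq Ω] [DecidableEq ι]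
  (b : Ω → ι) (π : Ω → ℝ) (u : Finset Ω → ℝ)

lemma rml_of_mem {A : Finset Ω} {ω : Ω} (hω : ω ∈ A) :
    rml b π u A ω =
      π ω * (u (A.filter (fun x => b x = b ω)) / ∑ x ∈ A.filter (fun x => b x = b ω), π x) /
        ∑ i ∈ A.image b, u (A.filter (fun x => b x = i)) := by
  rw [rml, if_pos hω]
  ring

lemma rml_div_rml (hu : ∀ B : Finset Ω, B.Nonempty → 0 < u B) {A : Finset Ω} {ω ω' : Ω}
    (hω : ω ∈ A) (hω' : ω' ∈ A) :
    rml b π u A ω / rml b π u A ω' =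
      π ω / π ω' *
        ((u (A.filter (fun x => b x = b ω)) / ∑ x ∈ A.filter (fun x => b x = b ω), π x) /
          (u (A.filter (fun x => b x = b ω')) / ∑ x ∈ A.filter (fun x => b x = b ω'), π x)) := by
  rw [rml_of_mem b π u hω, rml_of_mem b π u hω',
    div_div_div_cancel_right₀ (sum_image_filter_pos b u hu ⟨ω, hω⟩).ne', mul_div_mul_comm]

end Posterior

theorem stmt_2_general {Ω ι : Type*} [Fintype Ω] [DecidableEq Ω] [DecidableEq ι]
    (b : Ω → ι) (π : Ω → ℝ) (hπpos : ∀ ω, 0 < π ω)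
    (u : Finset Ω → ℝ) (hu : ∀ B : Finset Ω, B.Nonempty → 0 < u B)
    (hufull : ∀ i : ι,
      u (Finset.univ.filter (fun x => b x = i)) =
        ∑ ω ∈ Finset.univ.filter (fun x => b x = i), π ω)
    (hustrict : ∀ (D : Finset Ω) (i : ι), D.Nonempty →
      D ⊂ Finset.univ.filter (fun x => b x = i) → (∑ ω ∈ D, π ω) < u D)
    (i₀ : ι) (E : Finset Ω) (hEne : E.Nonempty)
    (hE : E ⊂ Finset.univ.filter (fun x => b x = i₀)) :
    ∀ ω ∈ (Finset.univ.filter (fun x => b x = i₀)) \ E, ∀ ω' : Ω, b ω' ≠ i₀ →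
      rml b π u (Finset.univ \ E) ω / rml b π u (Finset.univ \ E) ω' > π ω / π ω' := by
  intro ω hω ω' hω'
  set P := univ.filter (fun x => b x = i₀)
  obtain ⟨hωP, hωE⟩ := mem_sdiff.mp hω
  have hbω : b ω = i₀ := (mem_filter.mp hωP).2
  have hbE : ∀ x ∈ E, b x = i₀ := fun x hx => (mem_filter.mp (hE.subset hx)).2
  have hω'E : ω' ∉ E := fun h => hω' (hbE ω' h)
  have hcell : (univ \ E).filter (fun x => b x = b ω) = P \ E := by
    rw [filter_sdiff_eq, hbω]
  have hcell' : (univ \ E).filter (fun x => b x = b ω') = univ.filter (fun x => b x = b ω') := by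
    refine (filter_sdiff_eq _ _ _).trans (sdiff_eq_self_of_disjoint ?_)
    exact disjoint_left.mpr fun x hx hxE => hω' ((mem_filter.mp hx).2 ▸ hbE x hxE)
  have hPE : (P \ E).Nonempty := ⟨ω, hω⟩
  have hfactor : 1 < u (P \ E) / ∑ x ∈ P \ E, π x :=
    (one_lt_div (sum_pos (fun x _ => hπpos x) hPE)).mpr
      (hustrict _ i₀ hPE (sdiff_ssubset hE.subset hEne))
  have hfactor' : u (univ.filter (fun x => b x = b ω')) /
      ∑ x ∈ univ.filter (fun x => b x = b ω'), π x = 1 := by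
    rw [hufull]
    exact div_self (sum_pos (fun x _ => hπpos x) ⟨ω', by simp⟩).ne'
  rw [gt_iff_lt, rml_div_rml b π u hu (mem_sdiff.mpr ⟨mem_univ _, hωE⟩)
      (mem_sdiff.mpr ⟨mem_univ _, hω'E⟩),
    hcell, hcell', hfactor', div_one]
  exact lt_mul_of_one_lt_right (div_pos (hπpos ω) (hπpos ω')) hfactor

/-- with non-extremeness (`u(D) > π(D)` for nonempty proper subsets of blocks)
and `u(P) = π(P)` for full blocks, if `∅ ≠ E ⊊ P` for a block `P` with `Pᶜ ≠ ∅`, then taking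
`A = Eᶜ`, for `ω ∈ P\E` and `ω' ∈ Pᶜ` we get `π_A(ω)/π_A(ω') > π(ω)/π(ω')`, i.e. `Eᶜ` is
not ideal. -/
theorem stmt_2 {Ω ι : Type*} [Fintype Ω] [Nonempty Ω] [DecidableEq Ω] [DecidableEq ι]
    (b : Ω → ι) (π : Ω → ℝ) (hπpos : ∀ ω, 0 < π ω) (hπsum : ∑ ω, π ω = 1)
    (u : Finset Ω → ℝ) (hu : ∀ B : Finset Ω, B.Nonempty → 0 < u B)
    (hufull : ∀ i : ι,
      u (Finset.univ.filter (fun x => b x = i)) =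
        ∑ ω ∈ Finset.univ.filter (fun x => b x = i), π ω)
    (hustrict : ∀ (D : Finset Ω) (i : ι), D.Nonempty →
      D ⊂ Finset.univ.filter (fun x => b x = i) → (∑ ω ∈ D, π ω) < u D)
    (i₀ : ι) (E : Finset Ω) (hEne : E.Nonempty)
    (hE : E ⊂ Finset.univ.filter (fun x => b x = i₀)) :
    ∀ ω ∈ (Finset.univ.filter (fun x => b x = i₀)) \ E, ∀ ω' : Ω, b ω' ≠ i₀ →
      rml b π u (Finset.univ \ E) ω / rml b π u (Finset.univ \ E) ω' > π ω / π ω' :=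
  stmt_2_general b π hπpos u hu hufull hustrict i₀ E hEne hE
end

section
/- Under RML updating, every nonempty proper subset D of a block P ∈ 𝒫 is ideal: for any event A ⊇ D and ω, ω' ∈ D, π_A(ω)/π_A(ω') = π(ω)/π(ω') = π_D(ω)/π_D(ω'). -/
open Finset

section

variable {Ω ι : Type*} [Fintype Ω] [DecidableEq Ω] [DecidableEq ι]
  {b : Ω → ι} {π : Ω → ℝ} {u : Finset Ω → ℝ}

/-- Within one block, `rml` rescales the prior by a factor depending only on the block. -/
theorem rml_div_rml_of_block_eq (hπ : ∀ ω, 0 < π ω) (hu : ∀ B : Finset Ω, B.Nonempty → 0 < u B)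
    {A : Finset Ω} {ω ω' : Ω} (hω : ω ∈ A) (hω' : ω' ∈ A) (hb : b ω = b ω') :
    rml b π u A ω / rml b π u A ω' = π ω / π ω' := by
  have hmem : ω ∈ A.filter (fun x => b x = b ω) := mem_filter.2 ⟨hω, rfl⟩
  have hprior : 0 < ∑ x ∈ A.filter (fun x => b x = b ω), π x :=
    sum_pos (fun x _ => hπ x) ⟨ω, hmem⟩
  have hblock : 0 < u (A.filter (fun x => b x = b ω)) := hu _ ⟨ω, hmem⟩
  have htotal : 0 < ∑ j ∈ A.image b, u (A.filter (fun x => b x = j)) := by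
    refine sum_pos (fun j hj => ?_) ⟨b ω, mem_image_of_mem b hω⟩
    obtain ⟨x, hx, rfl⟩ := mem_image.1 hj
    exact hu _ ⟨x, mem_filter.2 ⟨hx, rfl⟩⟩
  rw [rml, rml, if_pos hω, if_pos hω', ← hb]
  field_simp

end

theorem stmt_6_general {Ω ι : Type*} [Fintype Ω] [DecidableEq Ω] [DecidableEq ι]
    (b : Ω → ι) (π : Ω → ℝ) (hπpos : ∀ ω, 0 < π ω)
    (u : Finset Ω → ℝ) (hu : ∀ B : Finset Ω, B.Nonempty → 0 < u B)
    (i : ι) (D : Finset Ω)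
    (hD : D ⊂ Finset.univ.filter (fun x => b x = i)) :
    ∀ A : Finset Ω, D ⊆ A → ∀ ω ∈ D, ∀ ω' ∈ D,
      rml b π u A ω / rml b π u A ω' = π ω / π ω' ∧
      rml b π u A ω / rml b π u A ω' = rml b π u D ω / rml b π u D ω' := by
  intro A hDA ω hω ω' hω'
  have hb : b ω = b ω' :=
    (mem_filter.1 (hD.subset hω)).2.trans (mem_filter.1 (hD.subset hω')).2.symm
  have hA := rml_div_rml_of_block_eq hπpos hu (hDA hω) (hDA hω') hb
  exact ⟨hA, hA.trans (rml_div_rml_of_block_eq hπpos hu hω hω' hb).symm⟩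

/-- under RML updating, every nonempty proper subset `D` of a block is ideal:
for any `A ⊇ D` and `ω, ω' ∈ D`, `π_A(ω)/π_A(ω') = π(ω)/π(ω') = π_D(ω)/π_D(ω')`. -/
theorem stmt_6 {Ω ι : Type*} [Fintype Ω] [Nonempty Ω] [DecidableEq Ω] [DecidableEq ι]
    (b : Ω → ι) (π : Ω → ℝ) (hπpos : ∀ ω, 0 < π ω) (hπsum : ∑ ω, π ω = 1)
    (u : Finset Ω → ℝ) (hu : ∀ B : Finset Ω, B.Nonempty → 0 < u B)
    (i : ι) (D : Finset Ω) (hDne : D.Nonempty)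
    (hD : D ⊂ Finset.univ.filter (fun x => b x = i)) :
    ∀ A : Finset Ω, D ⊆ A → ∀ ω ∈ D, ∀ ω' ∈ D,
      rml b π u A ω / rml b π u A ω' = π ω / π ω' ∧
      rml b π u A ω / rml b π u A ω' = rml b π u D ω / rml b π u D ω' :=
  stmt_6_general b π hπpos u hu i D hD
end

section
/- Let 𝒩 be a convex set of probability measures on finite Ω that is 𝒫-rectangular with respect to a partition 𝒫: for any π', π'' ∈ 𝒩 and block P, there exists π''' ∈ 𝒩 agreeing with π' on P and with π'' on P^c. Then for every event A, any π' ∈ 𝒩 maximizing π'(A) over 𝒩 also maximizes π'(A∩P) over 𝒩 for each block P with A∩P ≠ ∅; consequently max_{π'∈𝒩} π'(A) = Σ_{P: A∩P≠∅} max_{π'∈𝒩} π'(A∩P). -/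
open Finset

theorem sum_filter_le_sum_filter_of_sum_ite_le {Ω : Type*} {A : Finset Ω} {P : Ω → Prop}
    [DecidablePred P] {p q : Ω → ℝ}
    (h : ∑ ω ∈ A, (if P ω then q ω else p ω) ≤ ∑ ω ∈ A, p ω) :
    ∑ ω ∈ A.filter P, q ω ≤ ∑ ω ∈ A.filter P, p ω := by
  rw [sum_ite, ← sum_filter_add_sum_filter_not A P p] at h
  linarith

theorem stmt_8_general {Ω ι : Type*} [DecidableEq ι]
    (b : Ω → ι) (𝒩 : Set (Ω → ℝ))
    (hrect : ∀ p ∈ 𝒩, ∀ q ∈ 𝒩, ∀ i : ι,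
      (fun ω => if b ω = i then p ω else q ω) ∈ 𝒩)
    (A : Finset Ω) (p : Ω → ℝ) (hp : p ∈ 𝒩)
    (hmax : ∀ q ∈ 𝒩, ∑ ω ∈ A, q ω ≤ ∑ ω ∈ A, p ω) :
    (∀ i ∈ A.image b, ∀ q ∈ 𝒩,
      ∑ ω ∈ A.filter (fun x => b x = i), q ω ≤
        ∑ ω ∈ A.filter (fun x => b x = i), p ω) ∧
    ∑ ω ∈ A, p ω = ∑ i ∈ A.image b, ∑ ω ∈ A.filter (fun x => b x = i), p ω :=
  ⟨fun i _ q hq => sum_filter_le_sum_filter_of_sum_ite_le (hmax _ (hrect q hq p hp i)),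
    (sum_fiberwise_of_maps_to (fun _ => mem_image_of_mem b) p).symm⟩

/-- if a convex set `𝒩` of probability measures (all agreeing on the blocks
of the partition) is `𝒫`-rectangular, then any `p ∈ 𝒩` maximizing `p(A)` over `𝒩` also
maximizes `p(A∩P)` for each block `P` meeting `A`; consequently the maximum of `·(A)` is
the sum over blocks of the maxima of `·(A∩P)`. -/
theorem stmt_8 {Ω ι : Type*} [Fintype Ω] [DecidableEq Ω] [DecidableEq ι]
    (b : Ω → ι) (𝒩 : Set (Ω → ℝ)) (hne : 𝒩.Nonempty)
    (hprob : ∀ p ∈ 𝒩, (∀ ω, 0 ≤ p ω) ∧ ∑ ω, p ω = 1)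
    (hconv : ∀ p ∈ 𝒩, ∀ q ∈ 𝒩, ∀ t : ℝ, 0 ≤ t → t ≤ 1 →
      (fun ω => t * p ω + (1 - t) * q ω) ∈ 𝒩)
    (hagree : ∀ p ∈ 𝒩, ∀ q ∈ 𝒩, ∀ i : ι,
      ∑ ω ∈ Finset.univ.filter (fun x => b x = i), p ω =
        ∑ ω ∈ Finset.univ.filter (fun x => b x = i), q ω)
    (hrect : ∀ p ∈ 𝒩, ∀ q ∈ 𝒩, ∀ i : ι,
      (fun ω => if b ω = i then p ω else q ω) ∈ 𝒩)
    (A : Finset Ω) (p : Ω → ℝ) (hp : p ∈ 𝒩)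
    (hmax : ∀ q ∈ 𝒩, ∑ ω ∈ A, q ω ≤ ∑ ω ∈ A, p ω) :
    (∀ i ∈ A.image b, ∀ q ∈ 𝒩,
      ∑ ω ∈ A.filter (fun x => b x = i), q ω ≤
        ∑ ω ∈ A.filter (fun x => b x = i), p ω) ∧
    ∑ ω ∈ A, p ω = ∑ i ∈ A.image b, ∑ ω ∈ A.filter (fun x => b x = i), p ω :=
  stmt_8_general b 𝒩 hrect A p hp hmax
end

section
/- In the two-state two-signal model with benchmark prior parameters (η, α) and plausible signal accuracies β ∈ [β̲, β̄] in state s₁ and γ ∈ [γ̲, γ̄] in state s₂, the RML posterior after signal σ₁ is π_{σ₁}(s₁) = ηβ̄/(ηβ̄ + (1−η)(1−γ̲)), and after σ₂ is π_{σ₂}(s₂) = (1−η)γ̄/(η(1−β̲) + (1−η)γ̄). The agent exhibits confirmation bias, i.e., π_{σ₁}(s₁) > π(s₁|σ₁) and π_{σ₂}(s₁) > π(s₁|σ₂) where π(·|·) are Bayesian posteriors with accuracy α, if and only if γ̄/(1−β̲+γ̄) < α < β̄/(1+β̄−γ̲). -/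
/-!
Comparing two posteriors from the same prior `η` reduces to comparing likelihood ratios, since
`η p / (η p + (1 - η) q)` is increasing in `p / q`. After `σ₁` the RML agent's likelihood ratio is
`β̄ / (1 - γ̲)` against the Bayesian `α / (1 - α)`, and after `σ₂` it is `(1 - β̲) / γ̄` against
`(1 - α) / α`; each cross-multiplied comparison is linear in `α` and gives one of the two bounds.
-/

theorem div_add_lt_div_add_iff {K : Type*} [Field K] [LinearOrder K] [IsStrictOrderedRing K]
    {a b c d : K} (hab : 0 < a + b) (hcd : 0 < c + d) :
    a / (a + b) < c / (c + d) ↔ a * d < c * b := by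
  rw [div_lt_div_iff₀ hab hcd]
  constructor <;> intro h <;> linarith

theorem posterior_lt_posterior_iff {η p q p' q' : ℝ} (hη : η ∈ Set.Ioo (0 : ℝ) 1)
    (hp : 0 < p) (hq : 0 < q) (hp' : 0 < p') (hq' : 0 < q') :
    η * p / (η * p + (1 - η) * q) < η * p' / (η * p' + (1 - η) * q') ↔ p * q' < p' * q := by
  obtain ⟨hη0, hη1⟩ := hη
  have hη1' : 0 < 1 - η := sub_pos.mpr hη1
  rw [div_add_lt_div_add_iff (by positivity) (by positivity)]
  have hw : 0 < η * (1 - η) := mul_pos hη0 hη1'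
  calc η * p * ((1 - η) * q') < η * p' * ((1 - η) * q) ↔
        η * (1 - η) * (p * q') < η * (1 - η) * (p' * q) := by ring_nf
    _ ↔ p * q' < p' * q := mul_lt_mul_iff_right₀ hw

theorem mul_one_sub_lt_iff_lt_div {x u v : ℝ} (h : 0 < 1 + u - v) :
    x * (1 - v) < u * (1 - x) ↔ x < u / (1 + u - v) := by
  rw [lt_div_iff₀ h]
  constructor <;> intro h <;> linarith

theorem one_sub_mul_lt_iff_div_lt {x t w : ℝ} (h : 0 < 1 - t + w) :
    (1 - x) * w < (1 - t) * x ↔ w / (1 - t + w) < x := by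
  rw [div_lt_iff₀ h]
  constructor <;> intro h <;> linarith

theorem stmt_9_general (η α βl βu γl γu : ℝ)
    (hη : η ∈ Set.Ioo (0:ℝ) 1) (hα : α ∈ Set.Ioo (0:ℝ) 1)
    (hαβ : α ∈ Set.Icc βl βu) (hαγ : α ∈ Set.Icc γl γu) :
    (η * βu / (η * βu + (1 - η) * (1 - γl)) >
        η * α / (η * α + (1 - η) * (1 - α)) ∧
      η * (1 - βl) / (η * (1 - βl) + (1 - η) * γu) >
        η * (1 - α) / (η * (1 - α) + (1 - η) * α)) ↔
    (γu / (1 - βl + γu) < α ∧ α < βu / (1 + βu - γl)) := by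
  obtain ⟨hα0, hα1⟩ := hα
  obtain ⟨hβlα, hαβu⟩ := hαβ
  obtain ⟨hγlα, hαγu⟩ := hαγ
  rw [gt_iff_lt, gt_iff_lt,
    posterior_lt_posterior_iff hη hα0 (by linarith) (by linarith) (by linarith),
    posterior_lt_posterior_iff hη (by linarith) hα0 (by linarith) (by linarith),
    mul_one_sub_lt_iff_lt_div (by linarith), one_sub_mul_lt_iff_div_lt (by linarith)]
  exact and_comm

/-- in the two-state two-signal model with plausible signal accuracies
`β ∈ [βl, βu]`, `γ ∈ [γl, γu]`, the RML agent exhibits confirmation bias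
(`π_{σ₁}(s₁) > π(s₁|σ₁)` and `π_{σ₂}(s₁) > π(s₁|σ₂)`) if and only if
`γu/(1−βl+γu) < α < βu/(1+βu−γl)`. -/
theorem stmt_9 (η α βl βu γl γu : ℝ)
    (hη : η ∈ Set.Ioo (0:ℝ) 1) (hα : α ∈ Set.Ioo (0:ℝ) 1)
    (hβl : 0 < βl) (hβu : βu < 1) (hγl : 0 < γl) (hγu : γu < 1)
    (hαβ : α ∈ Set.Icc βl βu) (hαγ : α ∈ Set.Icc γl γu) :
    (η * βu / (η * βu + (1 - η) * (1 - γl)) >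
        η * α / (η * α + (1 - η) * (1 - α)) ∧
      η * (1 - βl) / (η * (1 - βl) + (1 - η) * γu) >
        η * (1 - α) / (η * (1 - α) + (1 - η) * α)) ↔
    (γu / (1 - βl + γu) < α ∧ α < βu / (1 + βu - γl)) :=
  stmt_9_general η α βl βu γl γu hη hα hαβ hαγ
end

section
/- In the two-state two-signal model with plausible accuracies β ∈ [β̲,β̄], γ ∈ [γ̲,γ̄], if β̄ ≥ 1−γ̲, γ̄ ≥ 1−β̲, and α > max{β̄/(1+β̄−γ̲), γ̄/(1−β̲+γ̄)}, then the RML agent exhibits conservatism: π(s₁) ≤ π_{σ₁}(s₁) < π(s₁|σ₁) and π(s₂) ≤ π_{σ₂}(s₂) < π(s₂|σ₂). -/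
/-!
Both the RML and the Bayesian posterior of a state are Bayes updates `p x / (p x + q y)` of its
prior `p` (with `q = 1 - p`) for some pair of likelihoods `x, y`. Such an update is at least the
prior exactly when `y ≤ x`, and it is strictly increasing in the likelihood ratio `x / y`. For
state `s₁` the RML ratio is `β̄ / (1 - γ̲)`, which is `≥ 1` by `β̄ ≥ 1 - γ̲` and `< α / (1 - α)`,
the Bayesian ratio, by `β̄ / (1 + β̄ - γ̲) < α`; state `s₂` is symmetric.
-/

namespace TwoStateRML

variable {p q x y : ℝ}

theorem le_bayesUpdate_iff (hp : 0 < p) (hq : 0 < q) (hpq : p + q = 1) (hx : 0 < x)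
    (hy : 0 < y) : p ≤ p * x / (p * x + q * y) ↔ y ≤ x := by
  rw [le_div_iff₀ (by positivity)]
  have hq' : q = 1 - p := by linarith
  subst hq'
  constructor
  · intro h
    nlinarith [mul_pos hp hq]
  · intro h
    nlinarith [mul_le_mul_of_nonneg_left h (mul_pos hp hq).le]

theorem bayesUpdate_lt_bayesUpdate_iff {x' y' : ℝ} (hp : 0 < p) (hq : 0 < q) (hx : 0 < x)
    (hy : 0 < y) (hx' : 0 < x') (hy' : 0 < y') :
    p * x / (p * x + q * y) < p * x' / (p * x' + q * y') ↔ x * y' < x' * y := by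
  rw [div_lt_div_iff₀ (by positivity) (by positivity)]
  have hpq : 0 < p * q := mul_pos hp hq
  constructor
  · intro h
    nlinarith
  · intro h
    nlinarith [mul_lt_mul_of_pos_left h hpq]

theorem div_add_lt_iff {a : ℝ} (hxy : 0 < x + y) : x / (x + y) < a ↔ x * (1 - a) < a * y := by
  rw [div_lt_iff₀ hxy]
  constructor <;> intro h <;> linarith

end TwoStateRML

open TwoStateRML in
theorem stmt_10_general (η α βl βu γl γu : ℝ)
    (hη : 1/2 ≤ η) (hη1 : η < 1) (hα : 1/2 ≤ α) (hα1 : α < 1)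
    (hαβ : α ∈ Set.Icc βl βu) (hαγ : α ∈ Set.Icc γl γu)
    (h1 : 1 - γl ≤ βu) (h2 : 1 - βl ≤ γu)
    (h3 : max (βu / (1 + βu - γl)) (γu / (1 - βl + γu)) < α) :
    (η ≤ η * βu / (η * βu + (1 - η) * (1 - γl)) ∧
      η * βu / (η * βu + (1 - η) * (1 - γl)) <
        η * α / (η * α + (1 - η) * (1 - α))) ∧
    ((1 - η) ≤ (1 - η) * γu / (η * (1 - βl) + (1 - η) * γu) ∧
      (1 - η) * γu / (η * (1 - βl) + (1 - η) * γu) <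
        (1 - η) * α / (η * (1 - α) + (1 - η) * α)) := by
  obtain ⟨hβl, hβu⟩ := hαβ
  obtain ⟨hγl, hγu⟩ := hαγ
  obtain ⟨h3β, h3γ⟩ := max_lt_iff.mp h3
  have hη0 : 0 < η := by linarith
  have hη1' : 0 < 1 - η := by linarith
  have hα0 : 0 < α := by linarith
  have hα1' : 0 < 1 - α := by linarith
  have hβu0 : 0 < βu := by linarith
  have hγu0 : 0 < γu := by linarith
  have hβl1 : 0 < 1 - βl := by linarith
  have hγl1 : 0 < 1 - γl := by linarith
  rw [show 1 + βu - γl = βu + (1 - γl) by ring, div_add_lt_iff (by linarith)] at h3β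
  rw [show 1 - βl + γu = γu + (1 - βl) by ring, div_add_lt_iff (by linarith)] at h3γ
  rw [add_comm (η * (1 - βl)), add_comm (η * (1 - α))]
  refine ⟨⟨?_, ?_⟩, ?_, ?_⟩
  · exact (le_bayesUpdate_iff hη0 hη1' (by ring) hβu0 hγl1).mpr h1
  · exact (bayesUpdate_lt_bayesUpdate_iff hη0 hη1' hβu0 hγl1 hα0 hα1').mpr h3β
  · exact (le_bayesUpdate_iff hη1' hη0 (by ring) hγu0 hβl1).mpr h2
  · exact (bayesUpdate_lt_bayesUpdate_iff hη1' hη0 hγu0 hβl1 hα0 hα1').mpr h3γ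

/-- in the two-state two-signal model, if `βu ≥ 1−γl`, `γu ≥ 1−βl`, and
`α > max{βu/(1+βu−γl), γu/(1−βl+γu)}`, the RML agent exhibits conservatism:
`π(s₁) ≤ π_{σ₁}(s₁) < π(s₁|σ₁)` and `π(s₂) ≤ π_{σ₂}(s₂) < π(s₂|σ₂)`. -/
theorem stmt_10 (η α βl βu γl γu : ℝ)
    (hη : 1/2 ≤ η) (hη1 : η < 1) (hα : 1/2 ≤ α) (hα1 : α < 1)
    (hβl : 0 < βl) (hβu : βu < 1) (hγl : 0 < γl) (hγu : γu < 1)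
    (hαβ : α ∈ Set.Icc βl βu) (hαγ : α ∈ Set.Icc γl γu)
    (h1 : 1 - γl ≤ βu) (h2 : 1 - βl ≤ γu)
    (h3 : max (βu / (1 + βu - γl)) (γu / (1 - βl + γu)) < α) :
    (η ≤ η * βu / (η * βu + (1 - η) * (1 - γl)) ∧
      η * βu / (η * βu + (1 - η) * (1 - γl)) <
        η * α / (η * α + (1 - η) * (1 - α))) ∧
    ((1 - η) ≤ (1 - η) * γu / (η * (1 - βl) + (1 - η) * γu) ∧
      (1 - η) * γu / (η * (1 - βl) + (1 - η) * γu) <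
        (1 - η) * α / (η * (1 - α) + (1 - η) * α)) :=
  stmt_10_general η α βl βu γl γu hη hη1 hα hα1 hαβ hαγ h1 h2 h3
end

section
/- (Chain-coherence implies submodularity of the upper probability within a block) Let 𝒩 be a nonempty set of probability measures on finite Ω and define u(B) = sup_{π'∈𝒩} π'(B). Suppose for every chain B₁ ⊆ B₂ ⊆ B₃ there exists π* ∈ 𝒩 with π*(Bᵢ) = u(Bᵢ) for i = 1,2,3. Then u is submodular on events: for any disjoint D₁, D₂ and any B ⊇ D₁∪D₂ with B\(D₁∪D₂) = C, u(C∪D₁∪D₂) + u(C) ≤ u(C∪D₁) + u(C∪D₂). -/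
open Finset

theorem union_add_inter_le_of_chain_attained {Ω M : Type*} [DecidableEq Ω]
    [AddCommMonoid M] [PartialOrder M] [IsOrderedAddMonoid M]
    (𝒩 : Set (Ω → M)) (u : Finset Ω → M)
    (hub : ∀ p ∈ 𝒩, ∀ B : Finset Ω, ∑ ω ∈ B, p ω ≤ u B)
    (hchain : ∀ B₁ B₂ B₃ : Finset Ω, B₁ ⊆ B₂ → B₂ ⊆ B₃ →
      ∃ p ∈ 𝒩, (∑ ω ∈ B₁, p ω = u B₁) ∧ (∑ ω ∈ B₂, p ω = u B₂) ∧
        (∑ ω ∈ B₃, p ω = u B₃))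
    (A B : Finset Ω) :
    u (A ∪ B) + u (A ∩ B) ≤ u A + u B := by
  obtain ⟨p, hp, h_inter, h_A, h_union⟩ :=
    hchain (A ∩ B) A (A ∪ B) inter_subset_left subset_union_left
  calc u (A ∪ B) + u (A ∩ B) = ∑ ω ∈ A ∪ B, p ω + ∑ ω ∈ A ∩ B, p ω := by
        rw [h_union, h_inter]
    _ = ∑ ω ∈ A, p ω + ∑ ω ∈ B, p ω := sum_union_inter
    _ ≤ u A + u B := by rw [h_A]; exact add_le_add_right (hub p hp B) _

theorem stmt_14_general {Ω : Type*} [DecidableEq Ω]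
    (𝒩 : Set (Ω → ℝ))
    (u : Finset Ω → ℝ)
    (hub : ∀ p ∈ 𝒩, ∀ B : Finset Ω, ∑ ω ∈ B, p ω ≤ u B)
    (hchain : ∀ B₁ B₂ B₃ : Finset Ω, B₁ ⊆ B₂ → B₂ ⊆ B₃ →
      ∃ p ∈ 𝒩, (∑ ω ∈ B₁, p ω = u B₁) ∧ (∑ ω ∈ B₂, p ω = u B₂) ∧
        (∑ ω ∈ B₃, p ω = u B₃))
    (C D₁ D₂ : Finset Ω)
    (h12 : Disjoint D₁ D₂) :
    u (C ∪ D₁ ∪ D₂) + u C ≤ u (C ∪ D₁) + u (C ∪ D₂) := by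
  have key := union_add_inter_le_of_chain_attained 𝒩 u hub hchain (C ∪ D₁) (C ∪ D₂)
  rwa [← union_union_distrib_left, ← union_assoc, ← union_inter_distrib_left,
    disjoint_iff_inter_eq_empty.mp h12, union_empty] at key

/-- chain-coherence implies submodularity of the upper probability:
if `u` is an upper bound for `𝒩` on all events and is attained simultaneously along any
chain `B₁ ⊆ B₂ ⊆ B₃` by some element of `𝒩`, then `u` is submodular:
for pairwise disjoint `C, D₁, D₂`, `u(C∪D₁∪D₂) + u(C) ≤ u(C∪D₁) + u(C∪D₂)`. -/
theorem stmt_14 {Ω : Type*} [Fintype Ω] [DecidableEq Ω]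
    (𝒩 : Set (Ω → ℝ)) (hne : 𝒩.Nonempty)
    (hprob : ∀ p ∈ 𝒩, (∀ ω, 0 ≤ p ω) ∧ ∑ ω, p ω = 1)
    (u : Finset Ω → ℝ)
    (hub : ∀ p ∈ 𝒩, ∀ B : Finset Ω, ∑ ω ∈ B, p ω ≤ u B)
    (hchain : ∀ B₁ B₂ B₃ : Finset Ω, B₁ ⊆ B₂ → B₂ ⊆ B₃ →
      ∃ p ∈ 𝒩, (∑ ω ∈ B₁, p ω = u B₁) ∧ (∑ ω ∈ B₂, p ω = u B₂) ∧
        (∑ ω ∈ B₃, p ω = u B₃))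
    (C D₁ D₂ : Finset Ω)
    (h12 : Disjoint D₁ D₂) (hC1 : Disjoint C D₁) (hC2 : Disjoint C D₂) :
    u (C ∪ D₁ ∪ D₂) + u C ≤ u (C ∪ D₁) + u (C ∪ D₂) :=
  stmt_14_general 𝒩 u hub hchain C D₁ D₂ h12
end

section
/- In the base-rate-uncertainty model with plausible base rates θ ∈ [θ̲,θ̄] (when signal matches state) and δ ∈ [δ̲,δ̄] (when it mismatches), RML posteriors are π_{σ₁}(s₁) = θ̄α/(θ̄α + (1−δ̲)(1−α)) and π_{σ₂}(s₂) = (1−θ̲)α/(δ̄(1−α) + (1−θ̲)α). The agent exhibits overconfidence, i.e., π_{σ₁}(s₁) > π(s₁|σ₁) and π_{σ₂}(s₂) > π(s₂|σ₂) relative to the Bayesian posteriors with base rate η, if and only if δ̄/(1−θ̲+δ̄) < η < θ̄/(1+θ̄−δ̲). -/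
/-!
Both posteriors are Bayes' rule applied to a pair of signal likelihoods: after `σ₁` the RML agent
uses `(θu, 1 - δl)`, after `σ₂` it uses `(1 - θl, δu)`, and the benchmark uses `(η, 1 - η)` and
`(1 - η, η)`. A posterior is increasing in the likelihood ratio, so each overconfidence inequality
is a cross-multiplied inequality that is linear in `η`.
-/

open Set

/-- The posterior probability of a state with prior `α` after a signal whose likelihood is `x` in
that state and `y` in the other one. -/
noncomputable def posterior (α x y : ℝ) : ℝ := x * α / (x * α + y * (1 - α))

lemma posterior_lt_posterior_iff_s18 {α x y x' y' : ℝ} (hα : α ∈ Ioo 0 1)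
    (hx : 0 < x) (hy : 0 < y) (hx' : 0 < x') (hy' : 0 < y') :
    posterior α x y < posterior α x' y' ↔ x * y' < x' * y := by
  obtain ⟨hα0, hα1⟩ := hα
  have hα1' : 0 < 1 - α := sub_pos.mpr hα1
  unfold posterior
  rw [div_lt_div_iff₀ (by positivity) (by positivity)]
  have cross : x' * α * (x * α + y * (1 - α)) - x * α * (x' * α + y' * (1 - α)) =
      α * (1 - α) * (x' * y - x * y') := by ring
  rw [← sub_pos, cross, mul_pos_iff_of_pos_left (by positivity), sub_pos]

theorem stmt_18_general (η α θl θu δl δu : ℝ)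
    (hη : η ∈ Set.Ioo (0:ℝ) 1) (hα : α ∈ Set.Ioo (0:ℝ) 1)
    (hηθ : η ∈ Set.Icc θl θu) (hηδ : η ∈ Set.Icc δl δu) :
    (θu * α / (θu * α + (1 - δl) * (1 - α)) >
        η * α / (η * α + (1 - η) * (1 - α)) ∧
      (1 - θl) * α / (δu * (1 - α) + (1 - θl) * α) >
        (1 - η) * α / (η * (1 - α) + (1 - η) * α)) ↔
    (δu / (1 - θl + δu) < η ∧ η < θu / (1 + θu - δl)) := by
  obtain ⟨hη0, hη1⟩ := hη
  obtain ⟨hθlη, hηθu⟩ := hηθ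
  obtain ⟨hδlη, hηδu⟩ := hηδ
  rw [add_comm (δu * (1 - α)), add_comm (η * (1 - α))]
  change posterior α θu (1 - δl) > posterior α η (1 - η) ∧
      posterior α (1 - θl) δu > posterior α (1 - η) η ↔ _
  rw [gt_iff_lt, gt_iff_lt,
    posterior_lt_posterior_iff_s18 hα hη0 (by linarith) (by linarith) (by linarith),
    posterior_lt_posterior_iff_s18 hα (by linarith) hη0 (by linarith) (by linarith),
    div_lt_iff₀ (by linarith), lt_div_iff₀ (by linarith)]
  constructor <;> rintro ⟨h₁, h₂⟩ <;> constructor <;> linarith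

/-- in the base-rate-uncertainty model with plausible base rates
`θ ∈ [θl, θu]` and `δ ∈ [δl, δu]`, the RML agent exhibits overconfidence
(`π_{σ₁}(s₁) > π(s₁|σ₁)` and `π_{σ₂}(s₂) > π(s₂|σ₂)`) if and only if
`δu/(1−θl+δu) < η < θu/(1+θu−δl)`. -/
theorem stmt_18 (η α θl θu δl δu : ℝ)
    (hη : η ∈ Set.Ioo (0:ℝ) 1) (hα : α ∈ Set.Ioo (0:ℝ) 1)
    (hθl : 0 < θl) (hθu : θu < 1) (hδl : 0 < δl) (hδu : δu < 1)
    (hηθ : η ∈ Set.Icc θl θu) (hηδ : η ∈ Set.Icc δl δu) :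
    (θu * α / (θu * α + (1 - δl) * (1 - α)) >
        η * α / (η * α + (1 - η) * (1 - α)) ∧
      (1 - θl) * α / (δu * (1 - α) + (1 - θl) * α) >
        (1 - η) * α / (η * (1 - α) + (1 - η) * α)) ↔
    (δu / (1 - θl + δu) < η ∧ η < θu / (1 + θu - δl)) :=
  stmt_18_general η α θl θu δl δu hη hα hηθ hηδ
end

section
/- (Rearrangement/chain-domination separation) Let K be a finite set of probability vectors on a finite set S, all with the same total mass m, and suppose p is a probability vector on S with mass m such that for every enumeration μ of S there exists q ∈ K with Σ_{i≤j} q(μ(i)) ≥ Σ_{i≤j} p(μ(i)) for all j. Then p lies in the convex hull of K. -/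
/-!
If `p ∉ co(K)`, separate them by a linear functional `c` with `c·q < c·p` for every `q ∈ K`.
Enumerate `S` so that `c` is nonincreasing and take the `q ∈ K` dominating `p` along that order.
By Abel summation `c·q - c·p` is a nonnegative combination of the partial sums of `q - p`
(the last one vanishes since the masses agree), all of which are nonnegative: contradiction.
-/

open Finset

theorem sum_mul_nonneg_of_antitoneOn_of_sum_Iic_nonneg {c d : ℕ → ℝ} {n : ℕ}
    (hc : AntitoneOn c (Set.Iio n)) (hd : ∀ i < n, 0 ≤ ∑ j ∈ Iic i, d j)
    (hd_total : ∑ j ∈ range n, d j = 0) :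
    0 ≤ ∑ i ∈ range n, c i * d i := by
  have hterm : ∀ i ∈ range (n - 1), (c (i + 1) - c i) * ∑ j ∈ range (i + 1), d j ≤ 0 := by
    intro i hi
    have hi : i + 1 < n := by rw [mem_range] at hi; omega
    refine mul_nonpos_of_nonpos_of_nonneg ?_ ?_
    · exact sub_nonpos.mpr (hc (by simp; omega) (by simpa using hi) (Nat.le_succ i))
    · simpa [Nat.range_succ_eq_Iic] using hd i (by omega)
  have habel := sum_range_by_parts c d n
  simp only [smul_eq_mul, hd_total, mul_zero, zero_sub] at habel
  rw [habel]
  exact neg_nonneg.mpr (sum_nonpos hterm)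

theorem Fin.sum_mul_nonneg_of_antitone_of_sum_Iic_nonneg {k : ℕ} {c d : Fin k → ℝ}
    (hc : Antitone c) (hd : ∀ j, 0 ≤ ∑ i ∈ Iic j, d i) (hd_total : ∑ i, d i = 0) :
    0 ≤ ∑ i, c i * d i := by
  set c' : ℕ → ℝ := Function.extend Fin.val c 0
  set d' : ℕ → ℝ := Function.extend Fin.val d 0
  have hc' : ∀ i : Fin k, c' i = c i := Fin.val_injective.extend_apply c 0
  have hd' : ∀ i : Fin k, d' i = d i := Fin.val_injective.extend_apply d 0
  have := sum_mul_nonneg_of_antitoneOn_of_sum_Iic_nonneg (c := c') (d := d') (n := k) ?_ ?_ ?_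
  · rw [← Fin.sum_univ_eq_sum_range] at this
    simpa only [hc', hd'] using this
  · intro i hi j hj hij
    lift i to Fin k using hi
    lift j to Fin k using hj
    simpa [hc'] using hc hij
  · intro i hi
    lift i to Fin k using hi
    simpa [← Fin.map_valEmbedding_Iic, hd'] using hd i
  · simpa [← Fin.sum_univ_eq_sum_range, hd'] using hd_total

theorem sum_mul_le_sum_mul_of_sum_Iic_le {S : Type*} [Fintype S] {k : ℕ} (μ : Fin k ≃ S)
    {c p q : S → ℝ} (hc : Antitone (c ∘ μ))
    (hdom : ∀ j, ∑ i ∈ univ.filter (fun i => i ≤ j), p (μ i) ≤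
      ∑ i ∈ univ.filter (fun i => i ≤ j), q (μ i))
    (hmass : ∑ s, p s = ∑ s, q s) :
    ∑ s, c s * p s ≤ ∑ s, c s * q s := by
  have key := Fin.sum_mul_nonneg_of_antitone_of_sum_Iic_nonneg
    (d := fun i => q (μ i) - p (μ i)) hc
    (fun j => by simpa [filter_ge_eq_Iic] using hdom j)
    (by rw [sum_sub_distrib, μ.sum_comp q, μ.sum_comp p, hmass, sub_self])
  simp only [Function.comp_apply, mul_sub, sum_sub_distrib, sub_nonneg] at key
  simpa only [μ.sum_comp (fun s => c s * p s), μ.sum_comp (fun s => c s * q s)] using key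

theorem exists_equiv_fin_antitone_comp {S α : Type*} [Fintype S] [LinearOrder α] (a : S → α) :
    ∃ μ : Fin (Fintype.card S) ≃ S, Antitone (a ∘ μ) := by
  let e := (Fintype.equivFin S).symm
  refine ⟨(Tuple.sort (OrderDual.toDual ∘ a ∘ e)).trans e, ?_⟩
  exact monotone_toDual_comp_iff.mp (Tuple.monotone_sort (OrderDual.toDual ∘ a ∘ e))

theorem exists_sum_mul_lt_of_notMem_convexHull {S : Type*} [Fintype S] [DecidableEq S]
    {K : Finset (S → ℝ)} {p : S → ℝ} (hp : p ∉ convexHull ℝ (K : Set (S → ℝ))) :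
    ∃ c : S → ℝ, ∀ q ∈ K, ∑ s, c s * q s < ∑ s, c s * p s := by
  obtain ⟨f, u, hfK, hfp⟩ := geometric_hahn_banach_closed_point (convex_convexHull ℝ _)
    (K.finite_toSet.isClosed_convexHull ℝ) hp
  have hf : ∀ x : S → ℝ, f x = ∑ s, f (Pi.single s 1) * x s := by
    intro x
    conv_lhs => rw [pi_eq_sum_univ' x]
    simp [mul_comm]
  exact ⟨fun s => f (Pi.single s 1), fun q hq => by
    simpa only [← hf] using (hfK q (subset_convexHull ℝ _ hq)).trans hfp⟩

theorem stmt_19_general {S : Type*} [Fintype S] [DecidableEq S]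
    (m : ℝ)
    (K : Finset (S → ℝ))
    (hKmass : ∀ q ∈ K, (∀ s, 0 ≤ q s) ∧ ∑ s, q s = m)
    (p : S → ℝ) (hpm : ∑ s, p s = m)
    (hdom : ∀ μ : Fin (Fintype.card S) ≃ S, ∃ q ∈ K,
      ∀ j : Fin (Fintype.card S),
        ∑ i ∈ Finset.univ.filter (fun i => i ≤ j), p (μ i) ≤
          ∑ i ∈ Finset.univ.filter (fun i => i ≤ j), q (μ i)) :
    p ∈ convexHull ℝ (K : Set (S → ℝ)) := by
  by_contra hp_notMem
  obtain ⟨c, hc⟩ := exists_sum_mul_lt_of_notMem_convexHull hp_notMem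
  obtain ⟨μ, hμ⟩ := exists_equiv_fin_antitone_comp c
  obtain ⟨q, hqK, hq⟩ := hdom μ
  have hmass : ∑ s, p s = ∑ s, q s := by rw [hpm, (hKmass q hqK).2]
  exact (hc q hqK).not_ge (sum_mul_le_sum_mul_of_sum_Iic_le μ hμ hq hmass)

/-- chain-domination separation: if `p` and all members of the finite set
`K` are nonnegative vectors of common total mass `m > 0`, and for every enumeration of `S`
some `q ∈ K` cumulatively dominates `p` along that order, then `p ∈ co(K)`. -/
theorem stmt_19 {S : Type*} [Fintype S] [DecidableEq S]
    (m : ℝ) (hm : 0 < m)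
    (K : Finset (S → ℝ)) (hK : K.Nonempty)
    (hKmass : ∀ q ∈ K, (∀ s, 0 ≤ q s) ∧ ∑ s, q s = m)
    (p : S → ℝ) (hp : ∀ s, 0 ≤ p s) (hpm : ∑ s, p s = m)
    (hdom : ∀ μ : Fin (Fintype.card S) ≃ S, ∃ q ∈ K,
      ∀ j : Fin (Fintype.card S),
        ∑ i ∈ Finset.univ.filter (fun i => i ≤ j), p (μ i) ≤
          ∑ i ∈ Finset.univ.filter (fun i => i ≤ j), q (μ i)) :
    p ∈ convexHull ℝ (K : Set (S → ℝ)) :=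
  stmt_19_general m K hKmass p hpm hdom
end
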